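/- arXiv:2502.18788 — 4 statements merged into one kernel-verified Lean document; each statement's English description precedes it below -/
import Mathlib

section
/- Let s > 1 and let φ : [2π,∞) → (0,∞) be a continuous function with φ(t) → 0 as t → ∞ such that S_φ is an almost circular spiral arc. If S_φ is a (1/s)-Hölder arc, i.e., there exist a homeomorphism f from [0,1] onto S_φ and a constant H > 0 with |f(x) − f(y)| ≤ H|x − y|^{1/s} for all x, y ∈ [0,1], then the series ∑_{n=1}^∞ φ_n^s converges. -/
/-- The parametrizing map `t ↦ φ(t) e^{it}` of a spiral. -/
noncomputable def spiralMap (φ : ℝ → ℝ) : ℝ → ℂ :=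
  fun t => (φ t : ℂ) * Complex.exp (t * Complex.I)

/-- The spiral `S_φ = {φ(t) e^{it} : t ∈ [2π, ∞)} ∪ {0}`. -/
noncomputable def spiral (φ : ℝ → ℝ) : Set ℂ :=
  spiralMap φ '' Set.Ici (2 * Real.pi) ∪ {0}

/-- `φ_j = max{φ(t) : t ∈ [2πj, 2π(j+1)]}`. -/
noncomputable def phiMax (φ : ℝ → ℝ) (j : ℕ) : ℝ :=
  sSup (φ '' Set.Icc (2 * Real.pi * j) (2 * Real.pi * (j + 1)))

/-- `S_φ` is a spiral arc: the map `t ↦ φ(t) e^{it}` is injective on `[2π, ∞)`. -/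
def IsSpiralArc (φ : ℝ → ℝ) : Prop :=
  Set.InjOn (spiralMap φ) (Set.Ici (2 * Real.pi))

/-- `S_φ` is almost circular with constant `C`: the length of each full turn `S_φ^j`
(the total variation of `spiralMap φ` over `[2πj, 2π(j+1)]`) is at most `C * φ_j`. -/
def IsAlmostCircularWith (φ : ℝ → ℝ) (C : ℝ) : Prop :=
  ∀ j : ℕ, 1 ≤ j →
    eVariationOn (spiralMap φ) (Set.Icc (2 * Real.pi * j) (2 * Real.pi * (j + 1)))
      ≤ ENNReal.ofReal (C * phiMax φ j)

/-- `S` is an `α`-Hölder arc: there is a homeomorphism `f` from `[0,1]` onto `S`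
(equivalently, a continuous injective surjection from the compact set `[0,1]`)
and `H > 0` with `|f x - f y| ≤ H |x - y| ^ α`. -/
def IsHolderArc (S : Set ℂ) (α : ℝ) : Prop :=
  ∃ f : ℝ → ℂ, Set.InjOn f (Set.Icc 0 1) ∧ f '' Set.Icc 0 1 = S ∧
    ∃ H > 0, ∀ x ∈ Set.Icc (0:ℝ) 1, ∀ y ∈ Set.Icc (0:ℝ) 1,
      ‖f x - f y‖ ≤ H * |x - y| ^ α

/-!
Pull the spiral back through the Hölder homeomorphism `f : [0,1] → S_φ`: the map
`ψ = f⁻¹ ∘ (t ↦ φ(t) e^{it})` is a continuous injection of `[2π, ∞)` into `[0,1]`, hence monotone.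
On the `j`-th turn choose `t` with `φ(t) = φ_j`. The points with parameters `t` and `t + π` are
antipodal, so their distance `φ(t) + φ(t + π)` is at least `φ_j`, and the Hölder bound gives
`φ_j ^ s ≤ H ^ s |ψ(t) - ψ(t + π)| ≤ H ^ s |ψ(2π(j + 2)) - ψ(2πj)|`. By monotonicity the intervals
between `ψ(2πj)` and `ψ(2π(j + 2))` cover `[0,1]` at most twice, so the partial sums of
`φ_j ^ s` stay below `2 H ^ s`.
-/

open Set Real

theorem IsCompact.continuousOn_invFunOn {α β : Type*} [TopologicalSpace α] [TopologicalSpace β]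
    [T2Space β] [Nonempty α] {f : α → β} {K : Set α} (hK : IsCompact K) (hf : ContinuousOn f K)
    (hinj : InjOn f K) : ContinuousOn (Function.invFunOn f K) (f '' K) := by
  rw [continuousOn_iff_isClosed]
  intro t ht
  refine ⟨f '' (K ∩ t), ((hK.inter_right ht).image_of_continuousOn
    (hf.mono inter_subset_left)).isClosed, ?_⟩
  ext y
  simp only [mem_inter_iff, mem_preimage]
  constructor
  · rintro ⟨hyt, x, hxK, rfl⟩
    exact ⟨⟨x, ⟨hxK, by rwa [hinj.leftInvOn_invFunOn hxK] at hyt⟩, rfl⟩, ⟨x, hxK, rfl⟩⟩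
  · rintro ⟨⟨x, ⟨hxK, hxt⟩, rfl⟩, -⟩
    exact ⟨by rwa [hinj.leftInvOn_invFunOn hxK], ⟨x, hxK, rfl⟩⟩

theorem ContinuousOn.strictMonoOn_or_strictAntiOn_Ici {α δ : Type*}
    [ConditionallyCompleteLinearOrder α] [TopologicalSpace α] [OrderTopology α] [DenselyOrdered α]
    [LinearOrder δ] [TopologicalSpace δ] [OrderClosedTopology δ] {a : α} {g : α → δ}
    (hc : ContinuousOn g (Ici a)) (hi : InjOn g (Ici a)) :
    StrictMonoOn g (Ici a) ∨ StrictAntiOn g (Ici a) := by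
  have : Inhabited (Ici a) := ⟨⟨a, mem_Ici.2 le_rfl⟩⟩
  exact (Continuous.strictMono_of_inj hc.domRestrict hi.injective).imp strictMono_domRestrict.mp
    strictAntiOn_iff_strictAnti.mpr

theorem continuousOn_of_dist_le_mul_rpow {X Y : Type*} [PseudoMetricSpace X] [PseudoMetricSpace Y]
    {f : X → Y} {s : Set X} {H r : ℝ} (hr : 0 < r)
    (hf : ∀ x ∈ s, ∀ y ∈ s, dist (f x) (f y) ≤ H * dist x y ^ r) : ContinuousOn f s := by
  refine HolderOnWith.continuousOn (C := H.toNNReal) (r := r.toNNReal) (fun x hx y hy => ?_)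
    (Real.toNNReal_pos.2 hr)
  rw [edist_dist, edist_dist, Real.coe_toNNReal _ hr.le,
    ENNReal.ofReal_rpow_of_nonneg dist_nonneg hr.le, ← ENNReal.ofReal_coe_nnreal,
    Real.coe_toNNReal', ← ENNReal.ofReal_mul (le_max_right _ _)]
  exact ENNReal.ofReal_le_ofReal ((hf x hx y hy).trans
    (mul_le_mul_of_nonneg_right (le_max_left _ _) (by positivity)))

theorem abs_sub_le_abs_sub_of_monotoneOn_or_antitoneOn {α β : Type*} [LinearOrder α]
    [AddCommGroup β] [LinearOrder β] [IsOrderedAddMonoid β] {g : α → β} {x y u v : α}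
    (hg : MonotoneOn g (Icc x y) ∨ AntitoneOn g (Icc x y)) (hu : u ∈ Icc x y) (hv : v ∈ Icc x y) :
    |g u - g v| ≤ |g y - g x| := by
  have hx : x ∈ Icc x y := left_mem_Icc.2 (hu.1.trans hu.2)
  have hy : y ∈ Icc x y := right_mem_Icc.2 (hu.1.trans hu.2)
  refine abs_sub_le_of_uIcc_subset_uIcc (uIcc_subset_uIcc ?_ ?_) <;> rcases hg with hg | hg
  · exact mem_uIcc_of_le (hg hx hv hv.1) (hg hv hy hv.2)
  · exact mem_uIcc_of_ge (hg hv hy hv.2) (hg hx hv hv.1)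
  · exact mem_uIcc_of_le (hg hx hu hu.1) (hg hu hy hu.2)
  · exact mem_uIcc_of_ge (hg hu hy hu.2) (hg hx hu hu.1)

theorem sum_range_sub_add_two_of_monotone {a : ℕ → ℝ} (ha : Monotone a) {m M : ℝ}
    (hbd : ∀ n, a n ∈ Icc m M) (N : ℕ) :
    ∑ n ∈ Finset.range N, |a (n + 2) - a n| ≤ 2 * (M - m) := by
  have htel : ∑ n ∈ Finset.range N, (a (n + 2) - a n) = (a (N + 1) - a 1) + (a N - a 0) := by
    rw [← Finset.sum_range_sub (fun n => a (n + 1)), ← Finset.sum_range_sub a,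
      ← Finset.sum_add_distrib]
    exact Finset.sum_congr rfl fun n _ => by ring
  rw [Finset.sum_congr rfl fun n _ => abs_of_nonneg (sub_nonneg.2 (ha (Nat.le_add_right n 2))),
    htel]
  linarith [(hbd (N + 1)).2, (hbd 1).1, (hbd N).2, (hbd 0).1]

theorem summable_abs_sub_add_two {a : ℕ → ℝ} (ha : Monotone a ∨ Antitone a) {m M : ℝ}
    (hbd : ∀ n, a n ∈ Icc m M) : Summable fun n => |a (n + 2) - a n| := by
  rcases ha with ha | ha
  · exact summable_of_sum_range_le (fun _ => abs_nonneg _)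
      (sum_range_sub_add_two_of_monotone ha hbd)
  · refine summable_of_sum_range_le (c := 2 * (-m - -M)) (fun _ => abs_nonneg _) fun N => ?_
    convert sum_range_sub_add_two_of_monotone ha.neg
      (fun n => ⟨neg_le_neg (hbd n).2, neg_le_neg (hbd n).1⟩) N using 2 with n
    rw [← abs_neg]
    ring_nf

theorem rpow_le_mul_of_le_mul_rpow_inv {x d H s : ℝ} (hx : 0 ≤ x) (hd : 0 ≤ d) (hH : 0 ≤ H)
    (hs : 0 < s) (h : x ≤ H * d ^ (1 / s)) : x ^ s ≤ H ^ s * d :=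
  calc x ^ s ≤ (H * d ^ (1 / s)) ^ s := rpow_le_rpow hx h hs.le
    _ = H ^ s * d := by
      rw [mul_rpow hH (rpow_nonneg hd _), ← rpow_mul hd, one_div_mul_cancel hs.ne', rpow_one]

theorem norm_spiralMap_sub_spiralMap_add_pi (φ : ℝ → ℝ) (t : ℝ) :
    ‖spiralMap φ t - spiralMap φ (t + π)‖ = |φ t + φ (t + π)| := by
  have h : spiralMap φ t - spiralMap φ (t + π) =
      ((φ t + φ (t + π) : ℝ) : ℂ) * Complex.exp (t * Complex.I) := by
    simp only [spiralMap]
    push_cast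
    rw [add_mul, Complex.exp_add, Complex.exp_pi_mul_I]
    ring
  rw [h, norm_mul, Complex.norm_exp_ofReal_mul_I, mul_one, Complex.norm_real, Real.norm_eq_abs]

theorem exists_phiMax_eq {φ : ℝ → ℝ} {j : ℕ}
    (hφ : ContinuousOn φ (Icc (2 * π * j) (2 * π * (j + 1)))) :
    ∃ t ∈ Icc (2 * π * j) (2 * π * (j + 1)), phiMax φ j = φ t :=
  isCompact_Icc.exists_sSup_image_eq (nonempty_Icc.2 (by gcongr; linarith)) hφ

theorem Icc_two_pi_mul_subset_Ici {j : ℝ} (hj : 1 ≤ j) (b : ℝ) :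
    Icc (2 * π * j) b ⊆ Ici (2 * π) :=
  fun _ ht => le_trans (le_mul_of_one_le_right (by positivity) hj) ht.1

theorem phiMax_pos {φ : ℝ → ℝ} (hφ : ContinuousOn φ (Ici (2 * π)))
    (hpos : ∀ t, 2 * π ≤ t → 0 < φ t) {j : ℕ} (hj : 1 ≤ j) : 0 < phiMax φ j := by
  have hsub := Icc_two_pi_mul_subset_Ici (Nat.one_le_cast.2 hj) (2 * π * (j + 1))
  obtain ⟨t, ht, hmax⟩ := exists_phiMax_eq (hφ.mono hsub)
  exact hmax ▸ hpos t (hsub ht)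

theorem continuousOn_spiralMap {φ : ℝ → ℝ} {T : Set ℝ} (hφ : ContinuousOn φ T) :
    ContinuousOn (spiralMap φ) T :=
  (Complex.continuous_ofReal.comp_continuousOn hφ).mul
    (Complex.continuous_exp.comp (Complex.continuous_ofReal.mul continuous_const)).continuousOn

theorem IsSpiralArc.exists_monotoneOn_or_antitoneOn_lift {φ : ℝ → ℝ} (harc : IsSpiralArc φ)
    (hφ : ContinuousOn φ (Ici (2 * π))) {f : ℝ → ℂ} (hf : ContinuousOn f (Icc 0 1))
    (hfinj : InjOn f (Icc 0 1)) (hfim : f '' Icc 0 1 = spiral φ) :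
    ∃ ψ : ℝ → ℝ, MapsTo ψ (Ici (2 * π)) (Icc 0 1) ∧ EqOn (f ∘ ψ) (spiralMap φ) (Ici (2 * π)) ∧
      (MonotoneOn ψ (Ici (2 * π)) ∨ AntitoneOn ψ (Ici (2 * π))) := by
  have hmaps : MapsTo (spiralMap φ) (Ici (2 * π)) (f '' Icc 0 1) :=
    fun t ht => hfim ▸ mem_union_left _ (mem_image_of_mem _ ht)
  set ψ := Function.invFunOn f (Icc 0 1) ∘ spiralMap φ
  have hfψ : EqOn (f ∘ ψ) (spiralMap φ) (Ici (2 * π)) :=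
    fun t ht => (surjOn_image f (Icc 0 1)).rightInvOn_invFunOn (hmaps ht)
  have hψc : ContinuousOn ψ (Ici (2 * π)) :=
    (isCompact_Icc.continuousOn_invFunOn hf hfinj).comp (continuousOn_spiralMap hφ) hmaps
  have hψinj : InjOn ψ (Ici (2 * π)) := (harc.congr hfψ.symm).of_comp
  exact ⟨ψ, (surjOn_image f (Icc 0 1)).mapsTo_invFunOn.comp hmaps, hfψ,
    (hψc.strictMonoOn_or_strictAntiOn_Ici hψinj).imp StrictMonoOn.monotoneOn
      StrictAntiOn.antitoneOn⟩

section Lift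

variable {φ : ℝ → ℝ} {f : ℝ → ℂ} {ψ : ℝ → ℝ} {s H : ℝ}

theorem le_mul_abs_sub_add_pi_rpow (hpos : ∀ t, 2 * π ≤ t → 0 < φ t)
    (hHold : ∀ x ∈ Icc (0 : ℝ) 1, ∀ y ∈ Icc (0 : ℝ) 1, ‖f x - f y‖ ≤ H * |x - y| ^ (1 / s))
    (hψ : MapsTo ψ (Ici (2 * π)) (Icc 0 1)) (hfψ : EqOn (f ∘ ψ) (spiralMap φ) (Ici (2 * π)))
    {t : ℝ} (ht : 2 * π ≤ t) : φ t ≤ H * |ψ t - ψ (t + π)| ^ (1 / s) := by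
  have htπ : t + π ∈ Ici (2 * π) := mem_Ici.2 (by linarith [pi_pos])
  calc φ t ≤ |φ t + φ (t + π)| := le_abs.2 (Or.inl (by linarith [hpos _ htπ]))
    _ = ‖f (ψ t) - f (ψ (t + π))‖ := by
      rw [← norm_spiralMap_sub_spiralMap_add_pi, ← hfψ ht, ← hfψ htπ]
      rfl
    _ ≤ H * |ψ t - ψ (t + π)| ^ (1 / s) := hHold _ (hψ ht) _ (hψ htπ)

theorem phiMax_rpow_le (hφ : ContinuousOn φ (Ici (2 * π))) (hpos : ∀ t, 2 * π ≤ t → 0 < φ t)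
    (hs : 0 < s) (hH : 0 ≤ H)
    (hHold : ∀ x ∈ Icc (0 : ℝ) 1, ∀ y ∈ Icc (0 : ℝ) 1, ‖f x - f y‖ ≤ H * |x - y| ^ (1 / s))
    (hψ : MapsTo ψ (Ici (2 * π)) (Icc 0 1)) (hfψ : EqOn (f ∘ ψ) (spiralMap φ) (Ici (2 * π)))
    (hmono : MonotoneOn ψ (Ici (2 * π)) ∨ AntitoneOn ψ (Ici (2 * π))) {j : ℕ} (hj : 1 ≤ j) :
    phiMax φ j ^ s ≤ H ^ s * |ψ (2 * π * (j + 2)) - ψ (2 * π * j)| := by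
  have hsub := Icc_two_pi_mul_subset_Ici (Nat.one_le_cast.2 hj) (2 * π * (j + 2))
  obtain ⟨t, ht, hmax⟩ := exists_phiMax_eq (hφ.mono ((Icc_subset_Icc_right
    (by linarith [pi_pos])).trans hsub))
  have ht' : t ∈ Icc (2 * π * j) (2 * π * (j + 2)) := ⟨ht.1, by linarith [ht.2, pi_pos]⟩
  have htπ : t + π ∈ Icc (2 * π * j) (2 * π * (j + 2)) :=
    ⟨by linarith [ht.1, pi_pos], by linarith [ht.2, pi_pos]⟩
  have hψturn : |ψ t - ψ (t + π)| ≤ |ψ (2 * π * (j + 2)) - ψ (2 * π * j)| :=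
    abs_sub_le_abs_sub_of_monotoneOn_or_antitoneOn (hmono.imp (·.mono hsub) (·.mono hsub)) ht' htπ
  rw [hmax]
  exact rpow_le_mul_of_le_mul_rpow_inv (hpos t (hsub ht')).le (abs_nonneg _) hH hs
    ((le_mul_abs_sub_add_pi_rpow hpos hHold hψ hfψ (hsub ht')).trans
      (mul_le_mul_of_nonneg_left (rpow_le_rpow (abs_nonneg _) hψturn (by positivity)) hH))

end Lift

theorem summable_of_spiral_isHolderArc_general (φ : ℝ → ℝ) (s : ℝ) (hs : 1 < s)
    (hcont : ContinuousOn φ (Set.Ici (2 * Real.pi)))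
    (hpos : ∀ t, 2 * Real.pi ≤ t → 0 < φ t)
    (harc : IsSpiralArc φ)
    (hHolder : IsHolderArc (spiral φ) (1 / s)) :
    Summable fun n : ℕ => phiMax φ (n + 1) ^ s := by
  obtain ⟨f, hfinj, hfim, H, hH, hHold⟩ := hHolder
  have hs₀ : 0 < s := by linarith
  have hf : ContinuousOn f (Icc 0 1) :=
    continuousOn_of_dist_le_mul_rpow (r := 1 / s) (by positivity) fun x hx y hy => by
      simpa only [dist_eq_norm, Real.norm_eq_abs] using hHold x hx y hy
  obtain ⟨ψ, hψ, hfψ, hmono⟩ := harc.exists_monotoneOn_or_antitoneOn_lift hcont hf hfinj hfim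
  have hturns : ∀ k : ℕ, 2 * π * (k + 1) ∈ Ici (2 * π) := fun k =>
    Icc_two_pi_mul_subset_Ici (by linarith [k.cast_nonneg (α := ℝ)]) _ (left_mem_Icc.2 le_rfl)
  set a : ℕ → ℝ := fun k => ψ (2 * π * (k + 1))
  have ha : Monotone a ∨ Antitone a := by
    refine hmono.imp (fun h i j hij => h (hturns i) (hturns j) ?_)
      (fun h i j hij => h (hturns i) (hturns j) ?_) <;> gcongr
  refine ((summable_abs_sub_add_two ha fun k => hψ (hturns k)).mul_left (H ^ s)).of_nonneg_of_le
    (fun n => rpow_nonneg (phiMax_pos hcont hpos (Nat.le_add_left 1 n)).le _) fun n => ?_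
  convert phiMax_rpow_le hcont hpos hs₀ hH.le hHold hψ hfψ hmono (Nat.le_add_left 1 n) using 4
  all_goals simp only [a]; push_cast; ring_nf

/-- If `S_φ` is an almost circular spiral arc, `s > 1`, and `S_φ` is a `(1/s)`-Hölder arc,
then `∑ φ_n ^ s` converges. -/
theorem summable_of_spiral_isHolderArc (φ : ℝ → ℝ) (s : ℝ) (hs : 1 < s)
    (hcont : ContinuousOn φ (Set.Ici (2 * Real.pi)))
    (hpos : ∀ t, 2 * Real.pi ≤ t → 0 < φ t)
    (hlim : Filter.Tendsto φ Filter.atTop (nhds 0))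
    (harc : IsSpiralArc φ)
    (C : ℝ) (hC : 0 < C) (hAC : IsAlmostCircularWith φ C)
    (hHolder : IsHolderArc (spiral φ) (1 / s)) :
    Summable fun n : ℕ => phiMax φ (n + 1) ^ s :=
  summable_of_spiral_isHolderArc_general φ s hs hcont hpos harc hHolder
end

section
/- Let 0 < r ≤ p ≤ 1. The map f : ℂ → ℂ defined by f(z) = |z|^{(r/p)−1} z for z ≠ 0 and f(0) = 0 is (r/p)-Hölder on ℂ (there is C > 0 with |f(z) − f(w)| ≤ C|z − w|^{r/p} for all z, w ∈ ℂ) and maps S_p onto S_r, i.e., f(S_p) = S_r. In particular, there exists a surjective (r/p)-Hölder map from S_p onto S_r. -/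
/-- The polynomial spiral `S_p = {t^{-p} e^{it} : t ∈ [2π, ∞)} ∪ {0}`. -/
noncomputable def polySpiral (p : ℝ) : Set ℂ :=
  spiral (fun t => t ^ (-p))

open Real Set

lemma rpow_sub_one_mul_le_rpow {α a d : ℝ} (hα : α ≤ 1) (hd : 0 ≤ d) (hda : d ≤ a) :
    a ^ (α - 1) * d ≤ d ^ α := by
  rcases hd.eq_or_lt with rfl | hd
  · simpa using rpow_nonneg le_rfl α
  · calc a ^ (α - 1) * d ≤ d ^ (α - 1) * d :=
          mul_le_mul_of_nonneg_right (rpow_le_rpow_of_nonpos hd hda (by linarith)) hd.le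
      _ = d ^ α := by rw [rpow_sub_one hd.ne', div_mul_cancel₀ _ hd.ne']

lemma abs_rpow_sub_one_sub_mul_le {α a b : ℝ} (hα0 : 0 ≤ α) (hα1 : α ≤ 1) (hb : 0 ≤ b)
    (hba : b ≤ a) : |a ^ (α - 1) - b ^ (α - 1)| * b ≤ a ^ (α - 1) * (a - b) := by
  rcases hb.eq_or_lt with rfl | hb
  · simpa using mul_nonneg (rpow_nonneg hba _) hba
  · have ha : 0 < a := hb.trans_le hba
    have hmono : a ^ (α - 1) ≤ b ^ (α - 1) := rpow_le_rpow_of_nonpos hb hba (by linarith)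
    have hpow : b ^ α ≤ a ^ α := rpow_le_rpow hb.le hba hα0
    have hb' : b ^ (α - 1) * b = b ^ α := by rw [rpow_sub_one hb.ne', div_mul_cancel₀ _ hb.ne']
    have ha' : a ^ (α - 1) * a = a ^ α := by rw [rpow_sub_one ha.ne', div_mul_cancel₀ _ ha.ne']
    rw [abs_of_nonpos (sub_nonpos.2 hmono)]
    linarith

section RadialStretch

variable {E : Type*} [NormedAddCommGroup E] [NormedSpace ℝ E] {α : ℝ}

noncomputable def radialStretch (α : ℝ) (x : E) : E :=
  ‖x‖ ^ (α - 1) • x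

lemma radialStretch_zero : radialStretch α (0 : E) = 0 :=
  smul_zero _

lemma norm_radialStretch (hα : 0 < α) (x : E) : ‖radialStretch α x‖ = ‖x‖ ^ α := by
  rcases eq_or_ne x 0 with rfl | hx
  · simp [radialStretch_zero, zero_rpow hα.ne']
  · have hx : 0 < ‖x‖ := norm_pos_iff.2 hx
    rw [radialStretch, norm_smul, norm_of_nonneg (rpow_nonneg hx.le _), rpow_sub_one hx.ne',
      div_mul_cancel₀ _ hx.ne']

lemma radialStretch_smul (hα : 0 < α) {c : ℝ} (hc : 0 ≤ c) (x : E) :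
    radialStretch α (c • x) = c ^ α • radialStretch α x := by
  rcases hc.eq_or_lt with rfl | hc
  · simp [radialStretch_zero, zero_rpow hα.ne']
  · rw [radialStretch, radialStretch, norm_smul, norm_of_nonneg hc.le,
      mul_rpow hc.le (norm_nonneg x), smul_smul, smul_smul, rpow_sub_one hc.ne']
    congr 1
    field_simp

lemma radialStretch_of_norm_eq_one {x : E} (hx : ‖x‖ = 1) : radialStretch α x = x := by
  rw [radialStretch, hx, one_rpow, one_smul]

lemma norm_radialStretch_sub_le (hα0 : 0 < α) (hα1 : α ≤ 1) (x y : E) :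
    ‖radialStretch α x - radialStretch α y‖ ≤ 2 * ‖x - y‖ ^ α := by
  wlog hyx : ‖y‖ ≤ ‖x‖ generalizing x y
  · rw [norm_sub_rev, norm_sub_rev x]
    exact this y x (le_of_not_ge hyx)
  rcases le_total ‖x‖ ‖x - y‖ with hxd | hdx
  · calc ‖radialStretch α x - radialStretch α y‖
        ≤ ‖radialStretch α x‖ + ‖radialStretch α y‖ := norm_sub_le _ _
      _ = ‖x‖ ^ α + ‖y‖ ^ α := by rw [norm_radialStretch hα0, norm_radialStretch hα0]
      _ ≤ ‖x - y‖ ^ α + ‖x - y‖ ^ α := by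
          gcongr
          exact hyx.trans hxd
      _ = 2 * ‖x - y‖ ^ α := (two_mul _).symm
  · have hsplit : radialStretch α x - radialStretch α y
        = ‖x‖ ^ (α - 1) • (x - y) + (‖x‖ ^ (α - 1) - ‖y‖ ^ (α - 1)) • y := by
      simp only [radialStretch, smul_sub, sub_smul]
      abel
    calc ‖radialStretch α x - radialStretch α y‖
        ≤ ‖x‖ ^ (α - 1) * ‖x - y‖ + |‖x‖ ^ (α - 1) - ‖y‖ ^ (α - 1)| * ‖y‖ := by
          rw [hsplit]
          refine (norm_add_le _ _).trans_eq ?_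
          rw [norm_smul, norm_smul, norm_of_nonneg (rpow_nonneg (norm_nonneg x) _), norm_eq_abs]
      _ ≤ ‖x‖ ^ (α - 1) * ‖x - y‖ + ‖x‖ ^ (α - 1) * (‖x‖ - ‖y‖) :=
          add_le_add le_rfl (abs_rpow_sub_one_sub_mul_le hα0.le hα1 (norm_nonneg y) hyx)
      _ ≤ ‖x‖ ^ (α - 1) * ‖x - y‖ + ‖x‖ ^ (α - 1) * ‖x - y‖ := by
          gcongr
          exact norm_sub_norm_le x y
      _ ≤ 2 * ‖x - y‖ ^ α := by
          rw [← two_mul]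
          gcongr
          exact rpow_sub_one_mul_le_rpow hα1 (norm_nonneg _) hdx

end RadialStretch

lemma radialStretch_spiralMap {α : ℝ} {φ : ℝ → ℝ} {t : ℝ} (hα : 0 < α) (hφ : 0 ≤ φ t) :
    radialStretch α (spiralMap φ t) = spiralMap (fun s => φ s ^ α) t := by
  simp only [spiralMap]
  rw [← Complex.real_smul (x := φ t), ← Complex.real_smul (x := φ t ^ α),
    radialStretch_smul hα hφ, radialStretch_of_norm_eq_one (Complex.norm_exp_ofReal_mul_I t)]

lemma spiral_congr {φ ψ : ℝ → ℝ} (h : EqOn φ ψ (Ici (2 * π))) : spiral φ = spiral ψ := by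
  rw [spiral, spiral, image_congr (g := spiralMap ψ) fun t ht => by simp only [spiralMap, h ht]]

lemma radialStretch_image_spiral {α : ℝ} {φ : ℝ → ℝ} (hα : 0 < α)
    (hφ : ∀ t ∈ Ici (2 * π), 0 ≤ φ t) :
    radialStretch α '' spiral φ = spiral (fun s => φ s ^ α) := by
  rw [spiral, spiral, image_union, image_singleton, image_image, radialStretch_zero]
  congr 1
  exact image_congr fun t ht => radialStretch_spiralMap hα (hφ t ht)

lemma radialStretch_image_polySpiral {p q : ℝ} (hp : 0 < p) (hq : 0 < q) :
    radialStretch (q / p) '' polySpiral p = polySpiral q := by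
  have hnonneg : ∀ t ∈ Ici (2 * π), 0 ≤ t := fun t ht => two_pi_pos.le.trans ht
  rw [polySpiral, radialStretch_image_spiral (div_pos hq hp) fun t ht =>
    rpow_nonneg (hnonneg t ht) _]
  refine spiral_congr fun t ht => ?_
  rw [← rpow_mul (hnonneg t ht)]
  congr 1
  field_simp

theorem radialStretch_holder_maps_polySpiral_general (p r : ℝ) (hr : 0 < r) (hrp : r ≤ p)
    (f : ℂ → ℂ) (hf0 : f 0 = 0)
    (hf : ∀ z : ℂ, z ≠ 0 → f z = (‖z‖ ^ (r / p - 1) : ℝ) * z) :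
    (∃ C > 0, ∀ z w : ℂ, ‖f z - f w‖ ≤ C * ‖z - w‖ ^ (r / p)) ∧
      f '' polySpiral p = polySpiral r := by
  have hp : 0 < p := hr.trans_le hrp
  obtain rfl : f = radialStretch (r / p) := by
    funext z
    rcases eq_or_ne z 0 with rfl | hz
    · rw [hf0, radialStretch_zero]
    · rw [hf z hz, radialStretch, Complex.real_smul]
  exact ⟨⟨2, two_pos, norm_radialStretch_sub_le (div_pos hr hp) ((div_le_one hp).2 hrp)⟩,
    radialStretch_image_polySpiral hp hr⟩

/-- For `0 < r ≤ p ≤ 1`, the radial stretch `f(z) = |z|^{r/p - 1} z`, `f(0) = 0`,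
is `(r/p)`-Hölder on `ℂ` and maps `S_p` onto `S_r`. -/
theorem radialStretch_holder_maps_polySpiral (p r : ℝ) (hr : 0 < r) (hrp : r ≤ p) (hp : p ≤ 1)
    (f : ℂ → ℂ) (hf0 : f 0 = 0)
    (hf : ∀ z : ℂ, z ≠ 0 → f z = (‖z‖ ^ (r / p - 1) : ℝ) * z) :
    (∃ C > 0, ∀ z w : ℂ, ‖f z - f w‖ ≤ C * ‖z - w‖ ^ (r / p)) ∧
      f '' polySpiral p = polySpiral r :=
  radialStretch_holder_maps_polySpiral_general p r hr hrp f hf0 hf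
end

section
/- Let X be a metric arc and s ≥ 1 with ‖X‖_{s-var} < ∞, and let f : [0,1] → X be a homeomorphism. If X' = f(I) where I is a closed subinterval of [0,1] with I ≠ [0,1] (so X' is a proper subarc of X), then ‖X'‖_{s-var} < ‖X‖_{s-var}. -/
open scoped ENNReal

/-- `f` parametrizes the metric space `X` as an arc: `f` is a continuous injection
of the compact interval `[0,1]` onto `X` (equivalently, a homeomorphism from `[0,1]`
onto `X`). -/
def IsArcParam {X : Type*} [MetricSpace X] (f : ℝ → X) : Prop :=
  ContinuousOn f (Set.Icc 0 1) ∧ Set.InjOn f (Set.Icc 0 1) ∧ f '' Set.Icc 0 1 = Set.univ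

/-- `X` is a metric arc: there is a homeomorphism from `[0,1]` onto `X`. -/
def IsMetricArc (X : Type*) [MetricSpace X] : Prop :=
  ∃ f : ℝ → X, IsArcParam f

/-- `A` is a subarc of the metric arc `X`: the image of a closed subinterval of `[0,1]`
under a homeomorphism from `[0,1]` onto `X`. -/
def IsSubarc {X : Type*} [MetricSpace X] (A : Set X) : Prop :=
  ∃ (f : ℝ → X) (a b : ℝ), IsArcParam f ∧ 0 ≤ a ∧ a ≤ b ∧ b ≤ 1 ∧ A = f '' Set.Icc a b

/-- The interior of a subarc `A`, described intrinsically: the points of `A` whose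
removal disconnects `A`.  For `A = f '' [a,b]` (with `a < b`) this is exactly
`f '' (a,b)`, i.e. `A` without its two endpoints. -/
def arcInterior {X : Type*} [MetricSpace X] (A : Set X) : Set X :=
  {x | x ∈ A ∧ ¬ IsPreconnected (A \ {x})}

/-- A partition of the metric arc `X`: a finite collection of subarcs with pairwise
disjoint interiors whose union is `X`. -/
def IsArcPartition {X : Type*} [MetricSpace X] (P : Finset (Set X)) : Prop :=
  (∀ A ∈ P, IsSubarc A) ∧
    ((P : Set (Set X)).Pairwise fun A B => Disjoint (arcInterior A) (arcInterior B)) ∧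
    ⋃₀ (P : Set (Set X)) = Set.univ

/-- The `s`-variation `‖X‖_{s-var}` of `X`: the supremum over all partitions of `X`
of the sums `∑ (diam A)^s`. -/
noncomputable def sVariation (X : Type*) [MetricSpace X] (s : ℝ) : ℝ≥0∞ :=
  ⨆ (P : Finset (Set X)) (_ : IsArcPartition P), ∑ A ∈ P, EMetric.diam A ^ s

/-- `H_{1/s}(X)`: the infimum of all `H` for which there is a surjection
`f : [0,1] → X` with `edist (f x) (f y) ≤ H * (edist x y)^(1/s)`; it equals `∞`
if no such surjection exists. -/
noncomputable def holderConstant (X : Type*) [MetricSpace X] (s : ℝ) : ℝ≥0∞ :=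
  sInf {H : ℝ≥0∞ | ∃ f : ℝ → X, f '' Set.Icc 0 1 = Set.univ ∧
    ∀ x ∈ Set.Icc (0:ℝ) 1, ∀ y ∈ Set.Icc (0:ℝ) 1, edist (f x) (f y) ≤ H * edist x y ^ (1 / s)}


/-! Completing any partition of the subarc `f '' [a, b]` by the complementary pieces
`f '' [0, a]` and `f '' [b, 1]` gives a partition of `X`. Hence
`‖f '' [a, b]‖_{s-var} + (diam K)^s ≤ ‖X‖_{s-var}` for each complementary piece `K`, and a
proper subarc has a complementary piece that is a nondegenerate arc, so `0 < diam K < ∞`;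
as `‖X‖_{s-var}` is finite, the inequality becomes strict. -/

open Set

section ArcInterior

variable {X Y : Type*} [MetricSpace X] [MetricSpace Y]

lemma arcInterior_subset (A : Set X) : arcInterior A ⊆ A := fun _ hx => hx.1

lemma arcInterior_image_subset {g : Y → X} {B : Set Y} (hg : ContinuousOn g B)
    (hinj : InjOn g B) : arcInterior (g '' B) ⊆ g '' arcInterior B := by
  rintro _ ⟨⟨y, hy, rfl⟩, hdisc⟩
  refine ⟨y, ⟨hy, fun hconn => hdisc ?_⟩, rfl⟩
  rw [← image_singleton, ← hinj.image_sdiff_subset (singleton_subset_iff.2 hy)]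
  exact hconn.image g (hg.mono sdiff_subset)

lemma arcInterior_Icc_subset (c d : ℝ) : arcInterior (Icc c d) ⊆ Ioo c d := by
  rintro t ⟨ht, hdisc⟩
  refine ⟨(ht.1.lt_of_ne ?_), (ht.2.lt_of_ne ?_)⟩
  · rintro rfl
    exact hdisc (by rw [Icc_sdiff_left]; exact isPreconnected_Ioc)
  · rintro rfl
    exact hdisc (by rw [Icc_sdiff_right]; exact isPreconnected_Ico)

end ArcInterior

section SVariation

variable {X : Type*} [MetricSpace X] {s : ℝ}

lemma sum_le_sVariation {P : Finset (Set X)} (hP : IsArcPartition P) :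
    ∑ A ∈ P, Metric.ediam A ^ s ≤ sVariation X s :=
  le_iSup₂ (f := fun P _ => ∑ A ∈ P, Metric.ediam A ^ s) P hP

/-- `hK` covers the case where `X` has no partition at all (a point, say), so that the
supremum defining `sVariation X s` is empty. -/
lemma sVariation_add_le {K V : ℝ≥0∞} (hK : K ≤ V)
    (h : ∀ P : Finset (Set X), IsArcPartition P → ∑ A ∈ P, Metric.ediam A ^ s + K ≤ V) :
    sVariation X s + K ≤ V := by
  by_cases hex : ∃ P : Finset (Set X), IsArcPartition P
  · rw [sVariation, ENNReal.biSup_add' hex]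
    exact iSup₂_le h
  · simpa [sVariation, not_exists.1 hex] using hK

lemma sum_image_val_ediam_rpow {A : Set X} [DecidableEq (Set X)] (P : Finset (Set A)) :
    ∑ C ∈ P.image (Subtype.val '' ·), Metric.ediam C ^ s =
      ∑ B ∈ P, Metric.ediam B ^ s := by
  rw [Finset.sum_image fun B _ B' _ h => image_injective.2 Subtype.val_injective h]
  simp only [isometry_subtype_coe.ediam_image]

end SVariation

namespace IsArcParam

variable {X : Type*} [MetricSpace X] {f : ℝ → X}

lemma isSubarc_image (hf : IsArcParam f) {c d : ℝ} (hc : 0 ≤ c) (hcd : c ≤ d) (hd : d ≤ 1) :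
    IsSubarc (f '' Icc c d) :=
  ⟨f, c, d, hf, hc, hcd, hd, rfl⟩

lemma arcInterior_image_Icc_subset (hf : IsArcParam f) {c d : ℝ} (hc : 0 ≤ c) (hd : d ≤ 1) :
    arcInterior (f '' Icc c d) ⊆ f '' Ioo c d :=
  have hsub : Icc c d ⊆ Icc 0 1 := Icc_subset_Icc hc hd
  (arcInterior_image_subset (hf.1.mono hsub) (hf.2.1.mono hsub)).trans
    (image_mono (arcInterior_Icc_subset c d))

lemma disjoint_arcInterior_image (hf : IsArcParam f) {c d : ℝ} (hc : 0 ≤ c) (hd : d ≤ 1)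
    {T : Set ℝ} (hT : T ⊆ Icc 0 1) (h : Disjoint (Ioo c d) T) :
    Disjoint (arcInterior (f '' Icc c d)) (f '' T) := by
  refine (disjoint_iff_inter_eq_empty.2 ?_).mono_left (hf.arcInterior_image_Icc_subset hc hd)
  rw [← hf.2.1.image_inter (Ioo_subset_Icc_self.trans (Icc_subset_Icc hc hd)) hT,
    h.inter_eq, image_empty]

lemma exists_eq_image_Icc (hf : IsArcParam f) {V : Set X} (hconn : IsConnected V)
    (hcpt : IsCompact V) : ∃ c d, 0 ≤ c ∧ c ≤ d ∧ d ≤ 1 ∧ V = f '' Icc c d := by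
  set F : Icc (0:ℝ) 1 → X := (Icc (0:ℝ) 1).domRestrict f
  have hF : Topology.IsClosedEmbedding F :=
    hf.1.domRestrict.isClosedEmbedding (injOn_iff_injective.1 hf.2.1)
  have hFV : F '' (F ⁻¹' V) = V := by
    rw [image_preimage_eq_iff, range_domRestrict, hf.2.2]
    exact subset_univ V
  set S : Set ℝ := Subtype.val '' (F ⁻¹' V)
  have hFS : f '' S = V := by rw [image_image]; exact hFV
  have hSconn : IsConnected S := by
    refine ⟨image_nonempty.1 (hFS ▸ hconn.1), ?_⟩
    refine IsPreconnected.image ?_ _ continuous_subtype_val.continuousOn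
    exact hF.isInducing.isPreconnected_image.1 (hFV.symm ▸ hconn.2)
  have hScpt : IsCompact S :=
    (hF.isCompact_preimage hcpt).image continuous_subtype_val
  have hS01 : S ⊆ Icc 0 1 := Subtype.coe_image_subset _ _
  refine ⟨sInf S, sSup S, (hS01 (hScpt.sInf_mem hSconn.1)).1,
    csInf_le_csSup hSconn.1 hScpt.bddBelow hScpt.bddAbove,
    (hS01 (hScpt.sSup_mem hSconn.1)).2, ?_⟩
  rw [← eq_Icc_of_connected_compact hSconn hScpt, hFS]

lemma exists_val_image_eq_image_Icc (hf : IsArcParam f) {a b : ℝ} (ha : 0 ≤ a) (hb : b ≤ 1)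
    {B : Set (f '' Icc a b)} (hB : IsSubarc B) :
    ∃ c d, a ≤ c ∧ c ≤ d ∧ d ≤ b ∧ Subtype.val '' B = f '' Icc c d := by
  obtain ⟨g, c, d, hg, hc, hcd, hd, rfl⟩ := hB
  have hgcd : ContinuousOn (Subtype.val ∘ g) (Icc c d) :=
    continuous_subtype_val.comp_continuousOn (hg.1.mono (Icc_subset_Icc hc hd))
  rw [image_image]
  obtain ⟨c', d', hc', hcd', hd', hV⟩ := hf.exists_eq_image_Icc
    ((isConnected_Icc hcd).image _ hgcd) (isCompact_Icc.image_of_continuousOn hgcd)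
  have hsub : f '' Icc c' d' ⊆ f '' Icc a b := hV ▸ by rintro _ ⟨t, -, rfl⟩; exact (g t).2
  rw [hf.2.1.image_subset_image_iff (Icc_subset_Icc hc' hd') (Icc_subset_Icc ha hb),
    Icc_subset_Icc_iff hcd'] at hsub
  exact ⟨c', d', hsub.1, hcd', hsub.2, hV⟩

lemma isArcPartition_insert_insert [DecidableEq (Set X)] (hf : IsArcParam f) {a b : ℝ}
    (ha : 0 ≤ a) (hab : a ≤ b) (hb : b ≤ 1) {𝒞 : Finset (Set X)}
    (hsub : ∀ C ∈ 𝒞, ∃ c d, a ≤ c ∧ c ≤ d ∧ d ≤ b ∧ C = f '' Icc c d)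
    (hdisj : (𝒞 : Set (Set X)).Pairwise fun C D => Disjoint (arcInterior C) (arcInterior D))
    (hunion : ⋃₀ (𝒞 : Set (Set X)) = f '' Icc a b) :
    IsArcPartition (insert (f '' Icc 0 a) (insert (f '' Icc b 1) 𝒞)) := by
  have ha1 : a ≤ 1 := hab.trans hb
  have hb0 : 0 ≤ b := ha.trans hab
  have hA : ∀ C ∈ 𝒞, arcInterior C ⊆ f '' Icc a b := fun C hC =>
    (arcInterior_subset C).trans (hunion ▸ subset_sUnion_of_mem hC)
  have hLR : Disjoint (arcInterior (f '' Icc 0 a)) (arcInterior (f '' Icc b 1)) :=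
    (hf.disjoint_arcInterior_image le_rfl ha1
      (Ioo_subset_Icc_self.trans (Icc_subset_Icc hb0 le_rfl))
      (disjoint_left.2 fun t h1 h2 => by linarith [h1.2, h2.1])).mono_right
      (hf.arcInterior_image_Icc_subset hb0 le_rfl)
  have hLA : Disjoint (arcInterior (f '' Icc 0 a)) (f '' Icc a b) :=
    hf.disjoint_arcInterior_image le_rfl ha1 (Icc_subset_Icc ha hb)
      (disjoint_left.2 fun t h1 h2 => by linarith [h1.2, h2.1])
  have hRA : Disjoint (arcInterior (f '' Icc b 1)) (f '' Icc a b) :=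
    hf.disjoint_arcInterior_image hb0 le_rfl (Icc_subset_Icc ha hb)
      (disjoint_left.2 fun t h1 h2 => by linarith [h1.1, h2.2])
  refine ⟨?_, ?_, ?_⟩
  · simp only [Finset.mem_insert]
    rintro C (rfl | rfl | hC)
    · exact hf.isSubarc_image le_rfl ha ha1
    · exact hf.isSubarc_image hb0 hb le_rfl
    · obtain ⟨c, d, hac, hcd, hdb, rfl⟩ := hsub C hC
      exact hf.isSubarc_image (ha.trans hac) hcd (hdb.trans hb)
  · have : Std.Symm fun C D : Set X => Disjoint (arcInterior C) (arcInterior D) :=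
      ⟨fun _ _ h => h.symm⟩
    simp only [Finset.coe_insert, pairwise_insert_of_symm, mem_insert_iff, Finset.mem_coe]
    refine ⟨⟨hdisj, fun C hC _ => hRA.mono_right (hA C hC)⟩, ?_⟩
    rintro C (rfl | hC) -
    exacts [hLR, hLA.mono_right (hA C hC)]
  · rw [Finset.coe_insert, Finset.coe_insert, sUnion_insert, sUnion_insert, hunion,
      ← image_union, ← image_union, union_comm (Icc b 1), Icc_union_Icc_eq_Icc hab hb,
      Icc_union_Icc_eq_Icc ha ha1, hf.2.2]

lemma isArcPartition_lift [DecidableEq (Set X)] (hf : IsArcParam f) {a b : ℝ}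
    (ha : 0 ≤ a) (hab : a ≤ b) (hb : b ≤ 1) {P : Finset (Set (f '' Icc a b))}
    (hP : IsArcPartition P) :
    IsArcPartition
      (insert (f '' Icc 0 a) (insert (f '' Icc b 1) (P.image (Subtype.val '' ·)))) := by
  refine hf.isArcPartition_insert_insert ha hab hb ?_ ?_ ?_
  · simp only [Finset.mem_image]
    rintro _ ⟨B, hB, rfl⟩
    exact hf.exists_val_image_eq_image_Icc ha hb (hP.1 B hB)
  · rw [Finset.coe_image]
    rintro _ ⟨B, hB, rfl⟩ _ ⟨B', hB', rfl⟩ hne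
    have hval (C : Set (f '' Icc a b)) :
        arcInterior (Subtype.val '' C) ⊆ Subtype.val '' arcInterior C :=
      arcInterior_image_subset continuous_subtype_val.continuousOn Subtype.val_injective.injOn
    exact ((disjoint_image_iff Subtype.val_injective).2
      (hP.2.1 hB hB' (ne_of_apply_ne _ hne))).mono (hval B) (hval B')
  · rw [Finset.coe_image, ← image_sUnion, hP.2.2, Subtype.coe_image_univ]

lemma ediam_image_Icc_rpow_ne_zero (hf : IsArcParam f) {c d : ℝ} (hc : 0 ≤ c) (hcd : c < d)
    (hd : d ≤ 1) (s : ℝ) : Metric.ediam (f '' Icc c d) ^ s ≠ 0 := by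
  have hsub : Icc c d ⊆ Icc 0 1 := Icc_subset_Icc hc hd
  have hfcd : f c ≠ f d := fun h => hcd.ne (hf.2.1 (hsub (left_mem_Icc.2 hcd.le))
    (hsub (right_mem_Icc.2 hcd.le)) h)
  refine (ENNReal.rpow_pos (Metric.ediam_pos_iff.2 ?_) ?_).ne'
  · exact ⟨f c, mem_image_of_mem f (left_mem_Icc.2 hcd.le), f d,
      mem_image_of_mem f (right_mem_Icc.2 hcd.le), hfcd⟩
  · exact (isCompact_Icc.image_of_continuousOn (hf.1.mono hsub)).isBounded.ediam_ne_top

lemma sVariation_add_ediam_rpow_le (hf : IsArcParam f) {a b c d : ℝ} (ha : 0 ≤ a)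
    (hab : a ≤ b) (hb : b ≤ 1) (hside : c = 0 ∧ d = a ∨ c = b ∧ d = 1) (hc : 0 ≤ c)
    (hcd : c < d) (hd : d ≤ 1) (s : ℝ) :
    sVariation (f '' Icc a b) s + Metric.ediam (f '' Icc c d) ^ s ≤ sVariation X s := by
  classical
  have hS_not_sub : ¬ f '' Icc c d ⊆ f '' Icc a b := by
    rw [hf.2.1.image_subset_image_iff (Icc_subset_Icc hc hd) (Icc_subset_Icc ha hb),
      Icc_subset_Icc_iff hcd.le]
    rcases hside with ⟨rfl, rfl⟩ | ⟨rfl, rfl⟩ <;> intro h <;> linarith [h.1, h.2]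
  have bound : ∀ 𝒞 : Finset (Set X), (∀ C ∈ 𝒞, C ⊆ f '' Icc a b) →
      IsArcPartition (insert (f '' Icc 0 a) (insert (f '' Icc b 1) 𝒞)) →
      ∑ C ∈ 𝒞, Metric.ediam C ^ s + Metric.ediam (f '' Icc c d) ^ s ≤ sVariation X s := by
    intro 𝒞 h𝒞 hpart
    have hS𝒞 : f '' Icc c d ∉ 𝒞 := fun hS => hS_not_sub (h𝒞 _ hS)
    have hsub :
        insert (f '' Icc c d) 𝒞 ⊆ insert (f '' Icc 0 a) (insert (f '' Icc b 1) 𝒞) := by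
      refine Finset.insert_subset ?_ ((Finset.subset_insert _ _).trans (Finset.subset_insert _ _))
      rcases hside with ⟨rfl, rfl⟩ | ⟨rfl, rfl⟩ <;> simp
    calc ∑ C ∈ 𝒞, Metric.ediam C ^ s + Metric.ediam (f '' Icc c d) ^ s
        = ∑ C ∈ insert (f '' Icc c d) 𝒞, Metric.ediam C ^ s := by
          rw [Finset.sum_insert hS𝒞, add_comm]
      _ ≤ _ := Finset.sum_le_sum_of_subset hsub
      _ ≤ sVariation X s := sum_le_sVariation hpart
  refine sVariation_add_le ?_ fun P hP => ?_
  · refine le_add_self.trans (bound {f '' Icc a b} (by simp) ?_)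
    exact hf.isArcPartition_insert_insert ha hab hb
      (by simp only [Finset.mem_singleton, forall_eq]; exact ⟨a, b, le_rfl, hab, le_rfl, rfl⟩)
      (by simp) (by simp)
  · rw [← sum_image_val_ediam_rpow]
    refine bound _ ?_ (hf.isArcPartition_lift ha hab hb hP)
    simp only [Finset.mem_image]
    rintro _ ⟨B, -, rfl⟩
    exact Subtype.coe_image_subset _ B

end IsArcParam

theorem sVariation_properSubarc_lt_general (X : Type*) [MetricSpace X] (s : ℝ)
    (hfin : sVariation X s < ⊤) (f : ℝ → X) (hf : IsArcParam f)
    (a b : ℝ) (ha : 0 ≤ a) (hab : a ≤ b) (hb : b ≤ 1)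
    (hne : Set.Icc a b ≠ Set.Icc (0:ℝ) 1) :
    sVariation (f '' Set.Icc a b) s < sVariation X s := by
  obtain ⟨c, d, hside, hc, hcd, hd⟩ :
      ∃ c d, (c = 0 ∧ d = a ∨ c = b ∧ d = 1) ∧ 0 ≤ c ∧ c < d ∧ d ≤ 1 := by
    rcases ha.lt_or_eq with ha0 | rfl
    · exact ⟨0, a, Or.inl ⟨rfl, rfl⟩, le_rfl, ha0, hab.trans hb⟩
    rcases hb.lt_or_eq with hb1 | rfl
    · exact ⟨b, 1, Or.inr ⟨rfl, rfl⟩, hab, hb1, le_rfl⟩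
    exact absurd rfl hne
  have hkey := hf.sVariation_add_ediam_rpow_le ha hab hb hside hc hcd hd s
  have hA : sVariation (f '' Icc a b) s ≠ ⊤ := (le_self_add.trans hkey).trans_lt hfin |>.ne
  exact (ENNReal.lt_add_right hA (hf.ediam_image_Icc_rpow_ne_zero hc hcd hd s)).trans_le hkey

/-- If `‖X‖_{s-var} < ∞` and `A = f '' I` is a proper subarc of `X` (where `f` is a
homeomorphism from `[0,1]` onto `X` and `I = [a,b] ⊆ [0,1]` with `I ≠ [0,1]`), then
`‖A‖_{s-var} < ‖X‖_{s-var}`. -/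
theorem sVariation_properSubarc_lt (X : Type*) [MetricSpace X] (s : ℝ) (hs : 1 ≤ s)
    (hfin : sVariation X s < ⊤) (f : ℝ → X) (hf : IsArcParam f)
    (a b : ℝ) (ha : 0 ≤ a) (hab : a ≤ b) (hb : b ≤ 1)
    (hne : Set.Icc a b ≠ Set.Icc (0:ℝ) 1) :
    sVariation (f '' Set.Icc a b) s < sVariation X s :=
  sVariation_properSubarc_lt_general X s hfin f hf a b ha hab hb hne
end

section
/- Let 0 < p ≤ q. Then for every j ∈ ℕ, the maximum of |t^{-p}cos t + i t^{-q}sin t| over t ∈ [2πj, 2π(j+1)] equals (2πj)^{-p}, and there exists a constant C > 0 (depending only on p and q) such that for every j ∈ ℕ the arclength of the curve t ↦ t^{-p}cos t + i t^{-q}sin t over [2πj, 2π(j+1)] is at most C (2πj)^{-p}; in other words, the elliptical spiral S_{p,q} is almost circular. -/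
/-- The parametrizing map `t ↦ t^{-p} cos t + i t^{-q} sin t` of the elliptical
spiral `S_{p,q}`. -/
noncomputable def ellipticalMap (p q : ℝ) : ℝ → ℂ :=
  fun t => (↑(t ^ (-p) * Real.cos t) : ℂ) + (↑(t ^ (-q) * Real.sin t) : ℂ) * Complex.I

/-- The elliptical spiral `S_{p,q} = {t^{-p} cos t + i t^{-q} sin t : t ∈ [2π, ∞)} ∪ {0}`. -/
noncomputable def ellipticalSpiral (p q : ℝ) : Set ℂ :=
  ellipticalMap p q '' Set.Ici (2 * Real.pi) ∪ {0}

/-!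
For `t ≥ 1` and `p ≤ q` we have `t^{-q} ≤ t^{-p}`, so `γ(t) = t^{-p} cos t + i t^{-q} sin t` lies in
the disc of radius `t^{-p}`, touching its boundary at `t = 2πj`; as `t^{-p}` decreases, the largest
modulus on the `j`-th turn is `(2πj)^{-p}`. Likewise `|γ'(t)| ≤ (p + q + 2) t^{-p}`, so `γ` is
`(p + q + 2) (2πj)^{-p}`-Lipschitz on the `j`-th turn, whose length is at most `2π` times that.
-/

open Set Real

theorem eVariationOn_Icc_le_of_norm_hasDerivWithinAt_le {E : Type*} [NormedAddCommGroup E]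
    [NormedSpace ℝ E] {f f' : ℝ → E} {a b C : ℝ}
    (hf : ∀ x ∈ Icc a b, HasDerivWithinAt f (f' x) (Icc a b) x)
    (bound : ∀ x ∈ Icc a b, ‖f' x‖ ≤ C) :
    eVariationOn f (Icc a b) ≤ ENNReal.ofReal (C * (b - a)) := by
  rcases lt_or_ge b a with hba | hab
  · rw [Icc_eq_empty_of_lt hba, eVariationOn.subsingleton f subsingleton_empty]
    exact zero_le
  have hC : 0 ≤ C := (norm_nonneg _).trans (bound a ⟨le_rfl, hab⟩)
  have hlip : LipschitzOnWith C.toNNReal f (Icc a b) :=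
    (convex_Icc a b).lipschitzOnWith_of_nnnorm_hasDerivWithin_le hf fun x hx => by
      simp [← NNReal.coe_le_coe, bound x hx]
  calc eVariationOn f (Icc a b) = eVariationOn (f ∘ id) (Icc a b) := rfl
    _ ≤ C.toNNReal * eVariationOn id (Icc a b) := hlip.comp_eVariationOn_le (mapsTo_id _)
    _ = ENNReal.ofReal (C * (b - a)) := by rw [eVariationOn_id_Icc, ENNReal.ofReal_mul hC]; rfl

theorem norm_mul_cos_add_mul_sin_mul_I_le {a b : ℝ} (t : ℝ) (hb : |b| ≤ a) :
    ‖(↑(a * cos t) : ℂ) + ↑(b * sin t) * Complex.I‖ ≤ a := by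
  have ha : 0 ≤ a := (abs_nonneg b).trans hb
  have hb2 : b ^ 2 ≤ a ^ 2 := sq_le_sq' (abs_le.1 hb).1 (abs_le.1 hb).2
  rw [Complex.norm_add_mul_I, sqrt_le_left ha]
  nlinarith [cos_sq_add_sin_sq t, sq_nonneg (sin t)]

theorem abs_neg_mul_rpow_sub_one_mul_add_rpow_mul_le {r t c s : ℝ} (hr : 0 ≤ r) (ht : 1 ≤ t)
    (hc : |c| ≤ 1) (hs : |s| ≤ 1) :
    |-r * t ^ (-r - 1) * c + t ^ (-r) * s| ≤ (r + 1) * t ^ (-r) := by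
  have h0 : 0 ≤ t ^ (-r - 1) := rpow_nonneg (by linarith) _
  have h1 : t ^ (-r - 1) ≤ t ^ (-r) := rpow_le_rpow_of_exponent_le ht (by linarith)
  have h2 : 0 ≤ t ^ (-r) := rpow_nonneg (by linarith) _
  calc |-r * t ^ (-r - 1) * c + t ^ (-r) * s|
      ≤ r * t ^ (-r - 1) * |c| + t ^ (-r) * |s| := by
        refine (abs_add_le _ _).trans_eq ?_
        rw [abs_mul, abs_mul, abs_mul, abs_neg, abs_of_nonneg hr, abs_of_nonneg h0,
          abs_of_nonneg h2]
    _ ≤ r * t ^ (-r) * 1 + t ^ (-r) * 1 := by gcongr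
    _ = (r + 1) * t ^ (-r) := by ring

noncomputable def ellipticalMapDeriv (p q : ℝ) (t : ℝ) : ℂ :=
  (↑(-p * t ^ (-p - 1) * cos t + t ^ (-p) * -sin t) : ℂ)
    + ↑(-q * t ^ (-q - 1) * sin t + t ^ (-q) * cos t) * Complex.I

namespace ellipticalMap

variable {p q : ℝ}

theorem norm_le (hpq : p ≤ q) {t : ℝ} (ht : 1 ≤ t) : ‖ellipticalMap p q t‖ ≤ t ^ (-p) := by
  refine norm_mul_cos_add_mul_sin_mul_I_le t ?_
  rw [abs_of_nonneg (rpow_nonneg (by linarith) _)]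
  exact rpow_le_rpow_of_exponent_le ht (by linarith)

theorem apply_two_pi_mul_nat (p q : ℝ) (j : ℕ) :
    ellipticalMap p q (2 * π * j) = ↑((2 * π * j) ^ (-p)) := by
  have hcos : cos (2 * π * j) = 1 := by
    rw [mul_comm, cos_nat_mul_two_pi]
  have hsin : sin (2 * π * j) = 0 := by
    rw [mul_comm, sin_periodic.nat_mul_eq, sin_zero]
  simp [ellipticalMap, hcos, hsin]

theorem isGreatest_norm_image_Icc (hp : 0 ≤ p) (hpq : p ≤ q) {j : ℕ} (hj : 1 ≤ 2 * π * j)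
    {b : ℝ} (hb : 2 * π * j ≤ b) :
    IsGreatest ((fun t => ‖ellipticalMap p q t‖) '' Icc (2 * π * j) b) ((2 * π * j) ^ (-p)) := by
  refine ⟨⟨2 * π * j, left_mem_Icc.2 hb, ?_⟩, ?_⟩
  · change ‖_‖ = _
    rw [apply_two_pi_mul_nat, Complex.norm_real, norm_of_nonneg (rpow_nonneg (by linarith) _)]
  · rintro _ ⟨t, ht, rfl⟩
    exact (norm_le hpq (hj.trans ht.1)).trans
      (rpow_le_rpow_of_nonpos (by linarith) ht.1 (by linarith))

theorem hasDerivAt (p q : ℝ) {t : ℝ} (ht : t ≠ 0) :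
    HasDerivAt (ellipticalMap p q) (ellipticalMapDeriv p q t) t := by
  have hre := ((hasDerivAt_rpow_const (p := -p) (Or.inl ht)).mul (hasDerivAt_cos t)).ofReal_comp
  have him := ((hasDerivAt_rpow_const (p := -q) (Or.inl ht)).mul (hasDerivAt_sin t)).ofReal_comp
  exact hre.add (him.mul_const Complex.I)

theorem norm_deriv_le (hp : 0 ≤ p) (hpq : p ≤ q) {t : ℝ} (ht : 1 ≤ t) :
    ‖ellipticalMapDeriv p q t‖ ≤ (p + q + 2) * t ^ (-p) := by
  have hre := abs_neg_mul_rpow_sub_one_mul_add_rpow_mul_le hp ht (abs_cos_le_one t)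
    ((abs_neg (sin t)).trans_le (abs_sin_le_one t))
  have him := abs_neg_mul_rpow_sub_one_mul_add_rpow_mul_le (hp.trans hpq) ht (abs_sin_le_one t)
    (abs_cos_le_one t)
  have hqp : (q + 1) * t ^ (-q) ≤ (q + 1) * t ^ (-p) :=
    mul_le_mul_of_nonneg_left (rpow_le_rpow_of_exponent_le ht (by linarith)) (by linarith)
  calc ‖ellipticalMapDeriv p q t‖
      ≤ |-p * t ^ (-p - 1) * cos t + t ^ (-p) * -sin t|
        + |-q * t ^ (-q - 1) * sin t + t ^ (-q) * cos t| := by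
        refine (norm_add_le _ _).trans_eq ?_
        rw [norm_mul, Complex.norm_I, mul_one, Complex.norm_real, Complex.norm_real,
          norm_eq_abs, norm_eq_abs]
    _ ≤ (p + 1) * t ^ (-p) + (q + 1) * t ^ (-p) := by linarith
    _ = (p + q + 2) * t ^ (-p) := by ring

theorem eVariationOn_Icc_le (hp : 0 ≤ p) (hpq : p ≤ q) {a : ℝ} (ha : 1 ≤ a) (b : ℝ) :
    eVariationOn (ellipticalMap p q) (Icc a b)
      ≤ ENNReal.ofReal ((p + q + 2) * a ^ (-p) * (b - a)) := by
  refine eVariationOn_Icc_le_of_norm_hasDerivWithinAt_le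
    (fun x hx => (hasDerivAt p q (by linarith [hx.1])).hasDerivWithinAt) fun x hx => ?_
  calc ‖ellipticalMapDeriv p q x‖
      ≤ (p + q + 2) * x ^ (-p) := norm_deriv_le hp hpq (ha.trans hx.1)
    _ ≤ (p + q + 2) * a ^ (-p) :=
      mul_le_mul_of_nonneg_left (rpow_le_rpow_of_nonpos (by linarith) hx.1 (by linarith))
        (by linarith)

end ellipticalMap

/-- For `0 < p ≤ q` and every `j ≥ 1`, the maximum of `|t^{-p} cos t + i t^{-q} sin t|`
over `t ∈ [2πj, 2π(j+1)]` equals `(2πj)^{-p}`, and there is `C > 0` (depending only on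
`p, q`) such that the arclength of the `j`-th turn is at most `C (2πj)^{-p}`: the
elliptical spiral `S_{p,q}` is almost circular. -/
theorem ellipticalSpiral_almost_circular (p q : ℝ) (hp : 0 < p) (hpq : p ≤ q) :
    (∀ j : ℕ, 1 ≤ j →
      IsGreatest ((fun t => ‖ellipticalMap p q t‖) ''
          Set.Icc (2 * Real.pi * j) (2 * Real.pi * (j + 1)))
        ((2 * Real.pi * j) ^ (-p))) ∧
    ∃ C > 0, ∀ j : ℕ, 1 ≤ j →
      eVariationOn (ellipticalMap p q) (Set.Icc (2 * Real.pi * j) (2 * Real.pi * (j + 1)))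
        ≤ ENNReal.ofReal (C * (2 * Real.pi * j) ^ (-p)) := by
  have hturn (j : ℕ) : 2 * π * j ≤ 2 * π * (j + 1) := by nlinarith [pi_pos]
  have hstart {j : ℕ} (hj : 1 ≤ j) : 1 ≤ 2 * π * j := by
    have : (1 : ℝ) ≤ j := by exact_mod_cast hj
    nlinarith [pi_gt_three]
  refine ⟨fun j hj => ellipticalMap.isGreatest_norm_image_Icc hp.le hpq (hstart hj) (hturn j),
    2 * π * (p + q + 2), by nlinarith [pi_pos], fun j hj => ?_⟩
  refine (ellipticalMap.eVariationOn_Icc_le hp.le hpq (hstart hj) _).trans_eq ?_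
  congr 1
  ring
end
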